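/- Let 0 ≤ S < T < ∞, d ∈ ℕ, n ∈ ℕ, and let k : Δ_{n+1}(S,T) → ℝ^{d×d} be measurable. If there exists a ∈ L²((0,T−S)^n;ℝ) such that |k(t_0,t_1,…,t_n)|_op ≤ a(t_0−t_1, t_1−t_2, …, t_{n−1}−t_n) for a.e. (t_0,t_1,…,t_n) ∈ Δ_{n+1}(S,T), then k ∈ V_{n+1}(S,T;ℝ^{d×d}) and ⦀k⦀_{V_{n+1}} ≤ ‖a‖_{L²((0,T−S)^n)}. -/

import Mathlib

open MeasureTheory
open scoped ENNReal

noncomputable section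

/-- Frobenius norm of a real matrix. -/
def frobNorm {m n : ℕ} (A : Matrix (Fin m) (Fin n) ℝ) : ℝ :=
  Real.sqrt (∑ i, ∑ j, (A i j) ^ 2)

/-- Operator norm of a real matrix with respect to the Euclidean norms. -/
def opNorm {m n : ℕ} (A : Matrix (Fin m) (Fin n) ℝ) : ℝ :=
  ‖LinearMap.toContinuousLinearMap (Matrix.toEuclideanLin A)‖

/-- The open simplex `Δ_n(S,T) = {(t₁,…,t_n) : T > t₁ > ⋯ > t_n > S}`. -/
def simplex (S T : ℝ) (n : ℕ) : Set (Fin n → ℝ) :=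
  {t | (∀ i, t i ∈ Set.Ioo S T) ∧ ∀ i j : Fin n, i < j → t j < t i}

/-- The open cube `(0,c)ⁿ`. -/
def cubeSet (c : ℝ) (n : ℕ) : Set (Fin n → ℝ) :=
  {x | ∀ i, x i ∈ Set.Ioo 0 c}

/-- Entrywise measurability of a matrix-valued kernel. -/
def MMeasurable {d₁ d₂ n : ℕ} (f : (Fin n → ℝ) → Matrix (Fin d₁) (Fin d₂) ℝ) : Prop :=
  ∀ p q, Measurable fun t => f t p q

/-- Square of the L² norm (Frobenius norm) over the simplex, as an extended real. -/
def l2sqE {d₁ d₂ : ℕ} (S T : ℝ) {n : ℕ}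
    (f : (Fin n → ℝ) → Matrix (Fin d₁) (Fin d₂) ℝ) : ℝ≥0∞ :=
  ∫⁻ t in simplex S T n, ENNReal.ofReal (frobNorm (f t) ^ 2)

/-- L² norm over the simplex. -/
def l2Norm {d₁ d₂ : ℕ} (S T : ℝ) {n : ℕ}
    (f : (Fin n → ℝ) → Matrix (Fin d₁) (Fin d₂) ℝ) : ℝ :=
  ((l2sqE S T f) ^ (1/2 : ℝ)).toReal

/-- Membership in `L²(Δ_n(S,T))`. -/
def MemL2 {d₁ d₂ : ℕ} (S T : ℝ) {n : ℕ}
    (f : (Fin n → ℝ) → Matrix (Fin d₁) (Fin d₂) ℝ) : Prop :=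
  MMeasurable f ∧ l2sqE S T f < ⊤

/-- The Volterra norm `⦀k⦀_{V_{n+1}(S,T)}` as an extended real:
ess sup over `t ∈ (S,T)` of the L²(op-norm) over `Δ_n(t,T)` of `k(·,t)`. -/
def vNormE {d : ℕ} (S T : ℝ) {n : ℕ}
    (k : (Fin (n+1) → ℝ) → Matrix (Fin d) (Fin d) ℝ) : ℝ≥0∞ :=
  essSup
    (fun t : ℝ =>
      (∫⁻ s in simplex t T n, ENNReal.ofReal (opNorm (k (Fin.snoc s t)) ^ 2)) ^ (1/2 : ℝ))
    (volume.restrict (Set.Ioo S T))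

def vNorm {d : ℕ} (S T : ℝ) {n : ℕ}
    (k : (Fin (n+1) → ℝ) → Matrix (Fin d) (Fin d) ℝ) : ℝ :=
  (vNormE S T k).toReal

/-- Membership in `V_{n+1}(S,T;ℝ^{d×d})`. -/
def MemV {d : ℕ} (S T : ℝ) {n : ℕ}
    (k : (Fin (n+1) → ℝ) → Matrix (Fin d) (Fin d) ℝ) : Prop :=
  MMeasurable k ∧ vNormE S T k < ⊤

/-- The `▷`-product. -/
def trprod {d₁ d₂ d₃ m n : ℕ}
    (f : (Fin (m+1) → ℝ) → Matrix (Fin d₁) (Fin d₂) ℝ)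
    (g : (Fin (n+1) → ℝ) → Matrix (Fin d₂) (Fin d₃) ℝ) :
    (Fin (m+n+1) → ℝ) → Matrix (Fin d₁) (Fin d₃) ℝ :=
  fun t =>
    f (fun i => t ⟨i.1, by have := i.2; omega⟩) *
    g (fun i => t ⟨m + i.1, by have := i.2; omega⟩)

/-- Recasting the arity of a kernel along an equality of naturals. -/
def reindexKer {d₁ d₂ a b : ℕ} (h : a = b)
    (f : (Fin a → ℝ) → Matrix (Fin d₁) (Fin d₂) ℝ) :
    (Fin b → ℝ) → Matrix (Fin d₁) (Fin d₂) ℝ :=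
  fun t => f (fun i => t (Fin.cast h i))

/-- Coefficient sequences of ⋆-Volterra kernels. -/
abbrev KSeq (d : ℕ) := ∀ n : ℕ, (Fin (n+1) → ℝ) → Matrix (Fin d) (Fin d) ℝ
/-- Coefficient sequences of adapted L²-processes. -/
abbrev LSeq (d d₁ : ℕ) := ∀ n : ℕ, (Fin (n+1) → ℝ) → Matrix (Fin d) (Fin d₁) ℝ
/-- Coefficient sequences of ∗-Volterra kernels. -/
abbrev JSeq (d : ℕ) := ∀ n : ℕ, (Fin (n+2) → ℝ) → Matrix (Fin d) (Fin d) ℝ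

/-- The graded ⋆-product `(K ⋆ ξ)_n = Σ_{j≤n} K_{n-j} ▷ ξ_j`. -/
def starP {d d₁ : ℕ} (K : KSeq d) (ξ : LSeq d d₁) : LSeq d d₁ :=
  fun n => ∑ j : Fin (n+1),
    reindexKer (by have := j.2; omega) (trprod (K (n - j.1)) (ξ j.1))

def KNormE {d : ℕ} (S T : ℝ) (K : KSeq d) : ℝ≥0∞ := ∑' n, vNormE S T (K n)
def KNorm {d : ℕ} (S T : ℝ) (K : KSeq d) : ℝ := (KNormE S T K).toReal
/-- Membership in `K(S,T)` (the ⋆-Volterra kernels). -/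
def MemK {d : ℕ} (S T : ℝ) (K : KSeq d) : Prop :=
  (∀ n, MMeasurable (K n)) ∧ KNormE S T K < ⊤

def LsqE {d d₁ : ℕ} (S T : ℝ) (ξ : LSeq d d₁) : ℝ≥0∞ := ∑' n, l2sqE S T (ξ n)
def LNorm {d d₁ : ℕ} (S T : ℝ) (ξ : LSeq d d₁) : ℝ := ((LsqE S T ξ) ^ (1/2 : ℝ)).toReal
/-- Membership in `L^{d×d₁}(S,T)`. -/
def MemL {d d₁ : ℕ} (S T : ℝ) (ξ : LSeq d d₁) : Prop :=
  (∀ n, MMeasurable (ξ n)) ∧ LsqE S T ξ < ⊤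

/-- Equality in `L^{d×d₁}(S,T)` (and in `K(S,T)`): coefficientwise a.e. equality
on the corresponding simplices. -/
def LEq {d d₁ : ℕ} (S T : ℝ) (f g : LSeq d d₁) : Prop :=
  ∀ n : ℕ, f n =ᵐ[volume.restrict (simplex S T (n+1))] g n

/-- The `∗`-product of two multi-parameter kernels. -/
def astProd {d₁ d₂ d₃ a b : ℕ}
    (j : (Fin (a+2) → ℝ) → Matrix (Fin d₁) (Fin d₂) ℝ)
    (g : (Fin (b+2) → ℝ) → Matrix (Fin d₂) (Fin d₃) ℝ) :
    (Fin (a+b+2) → ℝ) → Matrix (Fin d₁) (Fin d₃) ℝ :=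
  fun t => Matrix.of fun p q =>
    ∫ s in Set.Ioo (t ⟨a+1, by omega⟩) (t ⟨a, by omega⟩),
      (j (Fin.snoc (fun i : Fin (a+1) => t ⟨i.1, by have := i.2; omega⟩) s) *
       g (Fin.cons s (fun i : Fin (b+1) => t ⟨a+1+i.1, by have := i.2; omega⟩))) p q

/-- The `∗`-product of a multi-parameter kernel with an L²-type kernel
(lower integration limit `S` when `b = 0`). -/
def astProdL {d₁ d₂ d₃ a b : ℕ} (S : ℝ)
    (j : (Fin (a+2) → ℝ) → Matrix (Fin d₁) (Fin d₂) ℝ)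
    (f : (Fin (b+1) → ℝ) → Matrix (Fin d₂) (Fin d₃) ℝ) :
    (Fin (a+b+1) → ℝ) → Matrix (Fin d₁) (Fin d₃) ℝ :=
  fun t => Matrix.of fun p q =>
    ∫ s in Set.Ioo (if h : 0 < b then t ⟨a+1, by omega⟩ else S) (t ⟨a, by omega⟩),
      (j (Fin.snoc (fun i : Fin (a+1) => t ⟨i.1, by have := i.2; omega⟩) s) *
       f (Fin.cons s (fun i : Fin b => t ⟨a+1+i.1, by have := i.2; omega⟩))) p q

def jNormE {d : ℕ} (S T : ℝ) {n : ℕ}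
    (Jn : (Fin (n+2) → ℝ) → Matrix (Fin d) (Fin d) ℝ) : ℝ≥0∞ :=
  (∫⁻ t in simplex S T (n+2), ENNReal.ofReal (opNorm (Jn t) ^ 2)) ^ (1/2 : ℝ)

def JNormE {d : ℕ} (S T : ℝ) (J : JSeq d) : ℝ≥0∞ := ∑' n, jNormE S T (J n)
def JNorm {d : ℕ} (S T : ℝ) (J : JSeq d) : ℝ := (JNormE S T J).toReal
/-- Membership in `J(S,T)` (the ∗-Volterra kernels). -/
def MemJ {d : ℕ} (S T : ℝ) (J : JSeq d) : Prop :=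
  (∀ n, MMeasurable (J n)) ∧ JNormE S T J < ⊤

/-- Equality in `J(S,T)`. -/
def JEq {d : ℕ} (S T : ℝ) (J J' : JSeq d) : Prop :=
  ∀ n : ℕ, J n =ᵐ[volume.restrict (simplex S T (n+2))] J' n

/-- Graded product `J(S,T) × J(S,T) → J(S,T)`. -/
def astP {d : ℕ} (J J' : JSeq d) : JSeq d :=
  fun n => ∑ k : Fin (n+1),
    reindexKer (by have := k.2; omega) (astProd (J (n - k.1)) (J' k.1))

/-- Graded product `J(S,T) × L(S,T) → L(S,T)` (also `J(S,T) × K(S,T) → K(S,T)`). -/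
def astPL {d d₁ : ℕ} (S : ℝ) (J : JSeq d) (ξ : LSeq d d₁) : LSeq d d₁ :=
  fun n => ∑ k : Fin (n+1),
    reindexKer (by have := k.2; omega) (astProdL S (J (n - k.1)) (ξ k.1))

/-- Graded product `K(S,T) × J(S,T) → J(S,T)`. -/
def starPJ {d : ℕ} (K : KSeq d) (J : JSeq d) : JSeq d :=
  fun n => ∑ k : Fin (n+1),
    reindexKer (by have := k.2; omega) (trprod (K (n - k.1)) (J k.1))

/-- The `k`-th term of the backward ⋆-product. -/
def bstarTerm {d d₁ : ℕ} (T : ℝ) (K : KSeq d) (ξ : LSeq d d₁) (n : ℕ)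
    (t : Fin (n+1) → ℝ) (k : ℕ) : Matrix (Fin d) (Fin d₁) ℝ :=
  if h : n ≤ k then
    Matrix.of fun p q =>
      ∫ s in simplex (t 0) T (k - n),
        (K (k - n) (Fin.snoc s (t 0)) *
         ξ k (fun i => Fin.append s t (Fin.cast (by omega) i))) p q
  else 0

/-- The backward ⋆-product. -/
def bstarP {d d₁ : ℕ} (T : ℝ) (K : KSeq d) (ξ : LSeq d d₁) : LSeq d d₁ :=
  fun n t => ∑' k : ℕ, bstarTerm T K ξ n t k

/-- The `k`-th term of the backward ∗-product. -/
def bastTerm {d d₁ : ℕ} (T : ℝ) (J : JSeq d) (ξ : LSeq d d₁) (n : ℕ)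
    (t : Fin (n+1) → ℝ) (k : ℕ) : Matrix (Fin d) (Fin d₁) ℝ :=
  if h : n ≤ k then
    Matrix.of fun p q =>
      ∫ s in simplex (t 0) T (k - n + 1),
        (J (k - n) (Fin.snoc s (t 0)) *
         ξ k (fun i => Fin.append s (fun m : Fin n => t m.succ) (Fin.cast (by omega) i))) p q
  else 0

/-- The backward ∗-product. -/
def bastP {d d₁ : ℕ} (T : ℝ) (J : JSeq d) (ξ : LSeq d d₁) : LSeq d d₁ :=
  fun n t => ∑' k : ℕ, bastTerm T J ξ n t k

/-- Coefficientwise matrix transpose. -/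
def transK {d : ℕ} (K : KSeq d) : KSeq d := fun n t => (K n t).transpose
/-- Coefficientwise matrix transpose. -/
def transJ {d : ℕ} (J : JSeq d) : JSeq d := fun n t => (J n t).transpose

/-- Inner product of `L^d(S,T)`. -/
def Linner {d : ℕ} (S T : ℝ) (φ ψ : LSeq d 1) : ℝ :=
  ∑' n, ∫ t in simplex S T (n+1), ∑ i, φ n t i 0 * ψ n t i 0

/-- `R` is the ⋆-resolvent of `K` on `(S,T)`. -/
def IsStarResolvent {d : ℕ} (S T : ℝ) (K R : KSeq d) : Prop :=
  MemK S T R ∧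
  LEq S T R (fun n t => K n t + starP K R n t) ∧
  LEq S T R (fun n t => K n t + starP R K n t)

/-- `Q` is the ∗-resolvent of `J` on `(S,T)`. -/
def IsAstResolvent {d : ℕ} (S T : ℝ) (J Q : JSeq d) : Prop :=
  MemJ S T Q ∧
  JEq S T Q (fun n t => J n t + astP J Q n t) ∧
  JEq S T Q (fun n t => J n t + astP Q J n t)

/-- `(Q,R)` is the `(∗,⋆)`-resolvent of `(J,K)` on `(S,T)`. -/
def IsAstStarResolvent {d : ℕ} (S T : ℝ) (J : JSeq d) (K : KSeq d)
    (Q : JSeq d) (R : KSeq d) : Prop :=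
  MemJ S T Q ∧ MemK S T R ∧
  JEq S T Q (fun n t => J n t + astP J Q n t + starPJ K Q n t) ∧
  JEq S T Q (fun n t => J n t + astP Q J n t + starPJ R J n t) ∧
  LEq S T R (fun n t => K n t + astPL S J R n t + starP K R n t) ∧
  LEq S T R (fun n t => K n t + astPL S Q K n t + starP R K n t)

/-- The unit of `K(S,T)`: `(I_d, 0, 0, …)`. -/
def unitK (d : ℕ) : KSeq d := fun n =>
  match n with
  | 0 => fun _ => (1 : Matrix (Fin d) (Fin d) ℝ)
  | _ + 1 => fun _ => 0

/-- `starPow K m = K^{⋆(m+1)}`. -/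
def starPow {d : ℕ} (K : KSeq d) : ℕ → KSeq d
  | 0 => K
  | m + 1 => starP K (starPow K m)

/-! Fix `t ∈ (S,T)`. For `s ∈ Δ_n(t,T)` the point `(s,t)` lies in `Δ_{n+1}(S,T)`, and its gaps
`(s₀ - s₁, …, s_{n-1} - t)` lie in the cube `(0,T-S)ⁿ`. The map `s ↦ gaps (s,t)` is affine with
unitriangular linear part, so it preserves Lebesgue measure; hence for a.e. `t` the inner integral
of `|k(·,t)|²_op` over `Δ_n(t,T)` is at most `∫_{(0,T-S)ⁿ} a²`. -/

lemma measurableSet_simplex (S T : ℝ) (n : ℕ) : MeasurableSet (simplex S T n) := by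
  simp only [simplex, Set.ofPred_and, Set.ofPred_forall]
  exact (MeasurableSet.iInter fun i => measurableSet_Ioo.preimage (measurable_pi_apply i)).inter
    (MeasurableSet.iInter fun i => MeasurableSet.iInter fun j => MeasurableSet.iInter fun _ =>
      measurableSet_lt (measurable_pi_apply j) (measurable_pi_apply i))

lemma snoc_mem_simplex {S T t₀ : ℝ} {n : ℕ} (ht₀ : t₀ ∈ Set.Ioo S T) {s : Fin n → ℝ}
    (hs : s ∈ simplex t₀ T n) : (Fin.snoc s t₀ : Fin (n + 1) → ℝ) ∈ simplex S T (n + 1) := by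
  refine ⟨fun i => ?_, fun i j hij => ?_⟩
  · induction i using Fin.lastCases with
    | last => simpa using ht₀
    | cast i => simpa using ⟨ht₀.1.trans (hs.1 i).1, (hs.1 i).2⟩
  · induction j using Fin.lastCases with
    | last =>
      obtain ⟨i, rfl⟩ := Fin.exists_castSucc_eq.mpr hij.ne
      simpa using (hs.1 i).1
    | cast j =>
      obtain ⟨i, rfl⟩ := Fin.exists_castSucc_eq.mpr (hij.trans (Fin.castSucc_lt_last j)).ne
      simpa using hs.2 i j (Fin.castSucc_lt_castSucc_iff.mp hij)

def gaps (n : ℕ) : (Fin (n + 1) → ℝ) →ₗ[ℝ] Fin n → ℝ where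
  toFun u i := u i.castSucc - u i.succ
  map_add' u v := by ext; simp only [Pi.add_apply]; ring
  map_smul' c u := by ext; simp only [Pi.smul_apply, smul_eq_mul, RingHom.id_apply]; ring

@[simp]
lemma gaps_apply {n : ℕ} (u : Fin (n + 1) → ℝ) (i : Fin n) :
    gaps n u i = u i.castSucc - u i.succ :=
  rfl

lemma gaps_mem_cubeSet {S T : ℝ} {n : ℕ} {u : Fin (n + 1) → ℝ} (hu : u ∈ simplex S T (n + 1)) :
    gaps n u ∈ cubeSet (T - S) n := fun i => by
  have hlt := hu.2 _ _ i.castSucc_lt_succ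
  have := hu.1 i.castSucc
  have := hu.1 i.succ
  simp only [Set.mem_Ioo, gaps_apply] at *
  constructor <;> linarith

lemma snoc_eq_snoc_zero_add_single {n : ℕ} (s : Fin n → ℝ) (t₀ : ℝ) :
    (Fin.snoc s t₀ : Fin (n + 1) → ℝ) = Fin.snoc s 0 + Pi.single (Fin.last n) t₀ := by
  ext j
  induction j using Fin.lastCases <;> simp [Fin.castSucc_ne_last]

lemma snoc_single_zero {n : ℕ} (j : Fin n) (x : ℝ) :
    (Fin.snoc (Pi.single j x) 0 : Fin (n + 1) → ℝ) = Pi.single j.castSucc x := by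
  ext i
  induction i using Fin.lastCases <;> simp [Pi.single_apply, Fin.castSucc_ne_last]

def snocZeroGaps (n : ℕ) : (Fin n → ℝ) →ₗ[ℝ] Fin n → ℝ where
  toFun s := gaps n (Fin.snoc s 0)
  map_add' s s' := by
    rw [← map_add]; congr 1; ext j
    induction j using Fin.lastCases <;> simp
  map_smul' c s := by
    rw [← map_smul]; congr 1; ext j
    induction j using Fin.lastCases <;> simp

lemma det_snocZeroGaps (n : ℕ) : LinearMap.det (snocZeroGaps n) = 1 := by
  rw [← LinearMap.det_toMatrix', Matrix.det_of_isUpperTriangular]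
  · refine Finset.prod_eq_one fun i _ => ?_
    simp [snocZeroGaps, snoc_single_zero, (Fin.castSucc_lt_succ (i := i)).ne']
  · intro i j hji
    have : j.castSucc ≠ i.succ := (Fin.castSucc_lt_succ_iff.mpr hji.le).ne
    simp [snocZeroGaps, snoc_single_zero, (show j < i from hji).ne', this]

lemma gaps_snoc {n : ℕ} (s : Fin n → ℝ) (t₀ : ℝ) :
    gaps n (Fin.snoc s t₀) = snocZeroGaps n s + gaps n (Pi.single (Fin.last n) t₀) := by
  rw [snoc_eq_snoc_zero_add_single, map_add]
  rfl

lemma measurePreserving_snocZeroGaps (n : ℕ) : MeasurePreserving (snocZeroGaps n) :=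
  ⟨(snocZeroGaps n).continuous_of_finiteDimensional.measurable, by
    simpa [det_snocZeroGaps] using Real.map_linearMap_volume_pi_eq_smul_volume_pi
      (f := snocZeroGaps n) (by simp [det_snocZeroGaps])⟩

lemma measurableEmbedding_snocZeroGaps (n : ℕ) : MeasurableEmbedding (snocZeroGaps n) := by
  have hunit : IsUnit (snocZeroGaps n) :=
    (LinearMap.isUnit_iff_isUnit_det _).mpr (by simp [det_snocZeroGaps])
  exact ((snocZeroGaps n).isClosedEmbedding_of_injective
    (LinearMap.ker_eq_bot.mpr ((Module.End.isUnit_iff _).mp hunit).injective)).measurableEmbedding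

lemma measurePreserving_gaps_snoc (n : ℕ) (t₀ : ℝ) :
    MeasurePreserving fun s : Fin n → ℝ => gaps n (Fin.snoc s t₀) := by
  simp_rw [gaps_snoc]
  exact (measurePreserving_add_right volume _).comp (measurePreserving_snocZeroGaps n)

lemma measurableEmbedding_gaps_snoc (n : ℕ) (t₀ : ℝ) :
    MeasurableEmbedding fun s : Fin n → ℝ => gaps n (Fin.snoc s t₀) := by
  simp_rw [gaps_snoc]
  exact (measurableEmbedding_addRight _).comp (measurableEmbedding_snocZeroGaps n)

lemma setLIntegral_simplex_gaps_snoc_le {S T t₀ : ℝ} {n : ℕ} (ht₀ : t₀ ∈ Set.Ioo S T)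
    (f : (Fin n → ℝ) → ℝ≥0∞) :
    ∫⁻ s in simplex t₀ T n, f (gaps n (Fin.snoc s t₀)) ≤ ∫⁻ x in cubeSet (T - S) n, f x :=
  calc _ ≤ ∫⁻ s in (fun s => gaps n (Fin.snoc s t₀)) ⁻¹' cubeSet (T - S) n,
          f (gaps n (Fin.snoc s t₀)) :=
        lintegral_mono_set fun _ hs => gaps_mem_cubeSet (snoc_mem_simplex ht₀ hs)
    _ = _ := (measurePreserving_gaps_snoc n t₀).setLIntegral_comp_preimage_emb
        (measurableEmbedding_gaps_snoc n t₀) f _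

lemma ae_ae_snoc_of_ae {n : ℕ} {p : (Fin (n + 1) → ℝ) → Prop} (h : ∀ᵐ u, p u) :
    ∀ᵐ t : ℝ, ∀ᵐ s : Fin n → ℝ, p (Fin.snoc s t) := by
  have e := (volume_preserving_piFinSuccAbove (fun _ : Fin (n + 1) => ℝ) (Fin.last n)).symm
  refine Measure.ae_ae_of_ae_prod (p := fun x : ℝ × (Fin n → ℝ) => p (Fin.snoc x.2 x.1)) ?_
  convert e.quasiMeasurePreserving.ae h using 3 with x
  · simp [MeasurableEquiv.piFinSuccAbove, Fin.snocEquiv]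
  · exact (Measure.volume_eq_prod _ _).symm

theorem stmt1_general (S T : ℝ) (d : ℕ) (n : ℕ)
    (k : (Fin (n+1) → ℝ) → Matrix (Fin d) (Fin d) ℝ) (hk : MMeasurable k)
    (a : (Fin n → ℝ) → ℝ)
    (haL2 : ∫⁻ x in cubeSet (T - S) n, ENNReal.ofReal (a x ^ 2) < ⊤)
    (hbound : ∀ᵐ t ∂(volume.restrict (simplex S T (n+1))),
      opNorm (k t) ≤ a (fun i : Fin n => t i.castSucc - t i.succ)) :
    MemV S T k ∧
      vNormE S T k ≤ (∫⁻ x in cubeSet (T - S) n, ENNReal.ofReal (a x ^ 2)) ^ (1/2 : ℝ) := by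
  have hbound_snoc := ae_ae_snoc_of_ae ((ae_restrict_iff' (measurableSet_simplex S T _)).mp hbound)
  have hle : vNormE S T k ≤ (∫⁻ x in cubeSet (T - S) n, ENNReal.ofReal (a x ^ 2)) ^ (1/2 : ℝ) := by
    refine essSup_le_of_ae_le _ ?_
    filter_upwards [ae_restrict_of_ae hbound_snoc, ae_restrict_mem measurableSet_Ioo]
      with t ht htST
    refine ENNReal.rpow_le_rpow ?_ (by norm_num)
    calc ∫⁻ s in simplex t T n, ENNReal.ofReal (opNorm (k (Fin.snoc s t)) ^ 2)
        ≤ ∫⁻ s in simplex t T n, ENNReal.ofReal (a (gaps n (Fin.snoc s t)) ^ 2) := by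
          refine lintegral_mono_ae ?_
          filter_upwards [ae_restrict_of_ae ht, ae_restrict_mem (measurableSet_simplex t T n)]
            with s hs hs_mem
          gcongr
          exacts [norm_nonneg _, hs (snoc_mem_simplex htST hs_mem)]
      _ ≤ _ := setLIntegral_simplex_gaps_snoc_le htST _
  exact ⟨⟨hk, hle.trans_lt (ENNReal.rpow_lt_top_of_nonneg (by norm_num) haL2.ne)⟩, hle⟩

/-- If a measurable `k : Δ_{n+1}(S,T) → ℝ^{d×d}` is dominated in operator norm,
a.e. on the simplex, by `a(t₀−t₁, …, t_{n−1}−t_n)` for some `a ∈ L²((0,T−S)ⁿ)`, then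
`k ∈ V_{n+1}(S,T;ℝ^{d×d})` and `⦀k⦀_{V_{n+1}} ≤ ‖a‖_{L²((0,T−S)ⁿ)}`. -/
theorem stmt1 (S T : ℝ) (hS : 0 ≤ S) (hST : S < T) (d : ℕ) (hd : 0 < d) (n : ℕ) (hn : 0 < n)
    (k : (Fin (n+1) → ℝ) → Matrix (Fin d) (Fin d) ℝ) (hk : MMeasurable k)
    (a : (Fin n → ℝ) → ℝ) (ha : Measurable a)
    (haL2 : ∫⁻ x in cubeSet (T - S) n, ENNReal.ofReal (a x ^ 2) < ⊤)
    (hbound : ∀ᵐ t ∂(volume.restrict (simplex S T (n+1))),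
      opNorm (k t) ≤ a (fun i : Fin n => t i.castSucc - t i.succ)) :
    MemV S T k ∧
      vNormE S T k ≤ (∫⁻ x in cubeSet (T - S) n, ENNReal.ofReal (a x ^ 2)) ^ (1/2 : ℝ) :=
  stmt1_general S T d n k hk a haL2 hbound

end
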